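/- Let (n_i) be a strictly increasing sequence of positive integers with n_i | n_{i+1} and n_i → ∞, let X = lim← ℤ/n_iℤ be the odometer and p a prime with sup_i ord_p(n_i) < ∞. Then there exists a continuous cocycle c : ℤ × X → ℤ/pℤ for the odometer action that is not a coboundary. -/

import Mathlib

instance (m : ℕ) : TopologicalSpace (ZMod m) := ⊥

/-- The odometer space `lim← ℤ/n_iℤ`. -/
def OdometerSpace (n : ℕ → ℕ) (h : ∀ i, n i ∣ n (i + 1)) : Type :=
  {x : (i : ℕ) → ZMod (n i) // ∀ i, ZMod.castHom (h i) (ZMod (n i)) (x (i + 1)) = x i}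

instance (n : ℕ → ℕ) (h : ∀ i, n i ∣ n (i + 1)) : TopologicalSpace (OdometerSpace n h) := by
  unfold OdometerSpace; infer_instance

/-- The odometer `ℤ`-action: addition of `m` in every coordinate. -/
def odometer (n : ℕ → ℕ) (h : ∀ i, n i ∣ n (i + 1)) (m : ℤ)
    (x : OdometerSpace n h) : OdometerSpace n h :=
  ⟨fun i => x.1 i + (m : ZMod (n i)), fun i => by
    rw [map_add, x.2 i, map_intCast]⟩

/-!
Let `p ^ e` be the largest power of `p` dividing some `n i₀`. Reducing the `i₀`-th coordinate
modulo `D = p ^ e` is a continuous equivariant map `X → ℤ/D`, and the carry `(a + m) / D` of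
adding `m` to a representative `0 ≤ a < D` is an integer cocycle over `ℤ/D`; its reduction
mod `p` is the cocycle `c`. If `c` were the coboundary of a continuous `L`, then, since
translation by `n j` tends to the identity and `L` is locally constant, `c (n j) 0 = n j / p ^ e`
would vanish mod `p` for large `j`, i.e. `p ^ (e + 1) ∣ n j`, against the maximality of `e`.
-/
instance (m : ℕ) : DiscreteTopology (ZMod m) := ⟨rfl⟩

open Filter Topology

def ZMod.carry (D : ℕ) (m : ℤ) (a : ZMod D) : ℤ := (a.val + m) / D

theorem ZMod.carry_add (D : ℕ) (k m : ℤ) (a : ZMod D) :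
    carry D (k + m) a = carry D k (a + m) + carry D m a := by
  rcases eq_or_ne D 0 with rfl | hD
  · simp [carry]
  have : NeZero D := ⟨hD⟩
  have hval : ((a + m : ZMod D).val : ℤ) = (a.val + m) % D := by
    rw [← ZMod.val_intCast]; simp
  unfold carry
  rw [hval, Int.emod_def, show (a.val : ℤ) + (k + m) =
      (a.val + m - D * ((a.val + m) / D) + k) + (a.val + m) / D * D by ring,
    Int.add_mul_ediv_right _ _ (by exact_mod_cast hD)]

theorem ZMod.carry_zero_right (D : ℕ) (m : ℤ) : carry D m 0 = m / D := by
  simp [carry]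

theorem not_exists_coboundary_of_tendsto {ι α X G : Type*} [TopologicalSpace X] [AddGroup G]
    [TopologicalSpace G] [DiscreteTopology G] {T : ι → X → X} {c : ι → X → G}
    {l : Filter α} [l.NeBot] {m : α → ι} {x : X}
    (hT : Tendsto (fun a => T (m a) x) l (𝓝 x)) (hc : ∀ᶠ a in l, c (m a) x ≠ 0) :
    ¬ ∃ L : X → G, Continuous L ∧ ∀ k y, c k y = L (T k y) - L y := by
  rintro ⟨L, hL, hcob⟩
  have hLT : ∀ᶠ a in l, L (T (m a) x) = L x :=
    (hL.tendsto x).comp hT (isOpen_discrete {L x} |>.mem_nhds rfl)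
  obtain ⟨a, hLa, hca⟩ := (hLT.and hc).exists
  exact hca (by rw [hcob, hLa, sub_self])

theorem exists_pow_dvd_forall_not_pow_succ_dvd {ι : Type*} [Nonempty ι] (n : ι → ℕ) {p N : ℕ}
    (hN : ∀ i, ¬ p ^ (N + 1) ∣ n i) : ∃ e i₀, p ^ e ∣ n i₀ ∧ ∀ i, ¬ p ^ (e + 1) ∣ n i := by
  classical
  let P : ℕ → Prop := fun e => ∃ i, p ^ e ∣ n i
  obtain ⟨i₀, hi₀⟩ : P (Nat.findGreatest P N) :=
    Nat.findGreatest_spec (Nat.zero_le N) ⟨Classical.arbitrary ι, by simp⟩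
  refine ⟨_, i₀, hi₀, fun i hi => ?_⟩
  by_cases hle : Nat.findGreatest P N + 1 ≤ N
  · exact Nat.findGreatest_is_greatest (Nat.lt_succ_self _) hle ⟨i, hi⟩
  · exact hN i ((pow_dvd_pow p (by omega)).trans hi)

namespace OdometerSpace

variable {n : ℕ → ℕ} {h : ∀ i, n i ∣ n (i + 1)}

theorem tendsto_odometer_self (x : OdometerSpace n h) :
    Tendsto (fun j => odometer n h (n j) x) atTop (𝓝 x) := by
  refine tendsto_subtype_rng.2 (tendsto_pi_nhds.2 fun i => ?_)
  refine tendsto_const_nhds.congr' ?_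
  filter_upwards [eventually_ge_atTop i] with j hij
  show x.1 i = x.1 i + ((n j : ℤ) : ZMod (n i))
  have hdvd : n i ∣ n j := Nat.rel_of_forall_rel_succ_of_le (· ∣ ·) h hij
  rw [Int.cast_natCast, (ZMod.natCast_eq_zero_iff _ _).2 hdvd, add_zero]

def toZMod {D i : ℕ} (hD : D ∣ n i) (x : OdometerSpace n h) : ZMod D :=
  ZMod.castHom hD (ZMod D) (x.1 i)

theorem continuous_toZMod {D i : ℕ} (hD : D ∣ n i) : Continuous (toZMod (h := h) hD) :=
  continuous_of_discreteTopology.comp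
    (show Continuous fun x : OdometerSpace n h => x.1 i from
      (continuous_apply i).comp continuous_subtype_val)

theorem toZMod_odometer {D i : ℕ} (hD : D ∣ n i) (m : ℤ) (x : OdometerSpace n h) :
    toZMod hD (odometer n h m x) = toZMod hD x + m := by
  show ZMod.castHom hD (ZMod D) (x.1 i + m) = ZMod.castHom hD (ZMod D) (x.1 i) + m
  rw [map_add, map_intCast]

end OdometerSpace

open OdometerSpace in
theorem odometer_cocycle_not_coboundary_of_bounded_valuation_general
    (n : ℕ → ℕ)
    (h : ∀ i, n i ∣ n (i + 1))
    (p : ℕ) (hord : ∃ N : ℕ, ∀ i, ¬ p ^ (N + 1) ∣ n i) :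
    ∃ c : ℤ → OdometerSpace n h → ZMod p,
      (∀ m, Continuous (c m)) ∧
      (∀ (k m : ℤ) (x : OdometerSpace n h),
        c (k + m) x = c k (odometer n h m x) + c m x) ∧
      ¬ ∃ L : OdometerSpace n h → ZMod p, Continuous L ∧
        ∀ (m : ℤ) (x : OdometerSpace n h), c m x = L (odometer n h m x) - L x := by
  obtain ⟨N, hN⟩ := hord
  obtain ⟨e, i₀, hi₀, hmax⟩ := exists_pow_dvd_forall_not_pow_succ_dvd n hN
  let c : ℤ → OdometerSpace n h → ZMod p := fun m x => ZMod.carry (p ^ e) m (toZMod hi₀ x)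
  refine ⟨c, fun m => (continuous_of_discreteTopology (f := fun a =>
    (ZMod.carry (p ^ e) m a : ZMod p))).comp (continuous_toZMod hi₀), fun k m x => ?_, ?_⟩
  · simp only [c, toZMod_odometer, ZMod.carry_add, Int.cast_add]
  let z : OdometerSpace n h := ⟨fun _ => 0, fun _ => map_zero _⟩
  refine not_exists_coboundary_of_tendsto (tendsto_odometer_self z) ?_
  filter_upwards [eventually_ge_atTop i₀] with j hj hcz
  have hdvd : p ^ e ∣ n j := hi₀.trans (Nat.rel_of_forall_rel_succ_of_le (· ∣ ·) h hj)
  have hz : toZMod hi₀ z = 0 := map_zero _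
  simp only [c, hz, ZMod.carry_zero_right, ← Int.natCast_ediv, Int.cast_natCast,
    ZMod.natCast_eq_zero_iff, Nat.dvd_div_iff_mul_dvd hdvd, ← pow_succ] at hcz
  exact hmax j hcz

/-- If `sup_i ord_p(n_i) < ∞` (and `n_i → ∞`), then there is a continuous
`ℤ/pℤ`-valued cocycle over the odometer `lim← ℤ/n_iℤ` which is not a coboundary. -/
theorem odometer_cocycle_not_coboundary_of_bounded_valuation
    (n : ℕ → ℕ) (hpos : ∀ i, 0 < n i) (hmono : StrictMono n)
    (htop : Filter.Tendsto n Filter.atTop Filter.atTop)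
    (h : ∀ i, n i ∣ n (i + 1))
    (p : ℕ) (hp : p.Prime) (hord : ∃ N : ℕ, ∀ i, ¬ p ^ (N + 1) ∣ n i) :
    ∃ c : ℤ → OdometerSpace n h → ZMod p,
      (∀ m, Continuous (c m)) ∧
      (∀ (k m : ℤ) (x : OdometerSpace n h),
        c (k + m) x = c k (odometer n h m x) + c m x) ∧
      ¬ ∃ L : OdometerSpace n h → ZMod p, Continuous L ∧
        ∀ (m : ℤ) (x : OdometerSpace n h), c m x = L (odometer n h m x) - L x :=
  odometer_cocycle_not_coboundary_of_bounded_valuation_general n h p hord
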